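/- Let f(x) = 1 if Σ_{i=1}^n x_i > 0 and f(x) = 0 otherwise, with n even. Let g be the multivariate unbiased estimator under i.i.d. DLap(p) noise with p = e^{-ε}, ε ≤ 1. Then for every x ∈ ℤⁿ with Σ_i x_i = 0, Var[g(x̃)] = exp(Ω(n)), i.e., there exist constants C > 1 and c₀ > 0 (independent of n) such that Var[g(x̃)] ≥ c₀·Cⁿ/n^{5/2}. -/
import Mathlib


open scoped BigOperators

lemma hasSum_dlap {p : ℝ} (hp0 : 0 < p) (hp1 : p < 1) :
    HasSum (fun k : ℤ => (1 - p) / (1 + p) * p ^ |k|) 1 := by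
  have hne1 : (1 - p) ≠ 0 := by nlinarith
  have hne2 : (1 + p) ≠ 0 := by nlinarith
  have hgeo := hasSum_geometric_of_lt_one hp0.le hp1
  have h1 : HasSum (fun n : ℕ => (1 - p) / (1 + p) * p ^ |((n : ℤ))|)
      ((1 - p) / (1 + p) * (1 - p)⁻¹) := by
    have he : (fun n : ℕ => (1 - p) / (1 + p) * p ^ |((n : ℤ))|)
        = fun n : ℕ => (1 - p) / (1 + p) * p ^ n := by
      funext n
      rw [abs_of_nonneg (Int.natCast_nonneg n), zpow_natCast]
    rw [he]
    exact hgeo.mul_left _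
  have h2 : HasSum (fun n : ℕ => (1 - p) / (1 + p) * p ^ |(-((n : ℤ) + 1))|)
      ((1 - p) / (1 + p) * p * (1 - p)⁻¹) := by
    have he : (fun n : ℕ => (1 - p) / (1 + p) * p ^ |(-((n : ℤ) + 1))|)
        = fun n : ℕ => (1 - p) / (1 + p) * p * p ^ n := by
      funext n
      have habs : |(-((n : ℤ) + 1))| = (n : ℤ) + 1 := by
        rw [abs_neg, abs_of_nonneg (by positivity)]
      rw [habs, zpow_add₀ (ne_of_gt hp0), zpow_natCast, zpow_one]
      ring
    rw [he]
    exact hgeo.mul_left _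
  have key := HasSum.of_nat_of_neg_add_one
      (f := fun k : ℤ => (1 - p) / (1 + p) * p ^ |k|) h1 h2
  have hval : (1 - p) / (1 + p) * (1 - p)⁻¹ + (1 - p) / (1 + p) * p * (1 - p)⁻¹ = 1 := by
    field_simp
  rwa [hval] at key

lemma hasSum_W {p : ℝ} (hp0 : 0 < p) (hp1 : p < 1) :
    ∀ n : ℕ, HasSum (fun η : Fin n → ℤ => ∏ j, (1 - p) / (1 + p) * p ^ |η j|) 1
  | 0 => by
    have h := hasSum_single (f := fun _ : Fin 0 → ℤ => (1 : ℝ)) default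
      (fun b hb => absurd (Subsingleton.elim b default) hb)
    simpa using h
  | (n + 1) => by
    have ih := hasSum_W hp0 hp1 n
    have h1 := hasSum_dlap hp0 hp1
    have hprod : Summable (fun z : ℤ × (Fin n → ℤ) =>
        ((1 - p) / (1 + p) * p ^ |z.1|) * ∏ j, (1 - p) / (1 + p) * p ^ |z.2 j|) := by
      apply h1.summable.mul_of_nonneg ih.summable
      · intro k
        exact mul_nonneg (div_nonneg (by linarith) (by linarith)) (zpow_nonneg hp0.le _)
      · intro η
        apply Finset.prod_nonneg
        intro j _
        exact mul_nonneg (div_nonneg (by linarith) (by linarith)) (zpow_nonneg hp0.le _)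
    have hm := h1.mul ih hprod
    rw [one_mul] at hm
    rw [← (Fin.consEquiv (fun _ : Fin (n + 1) => ℤ)).hasSum_iff]
    have hcomp : ((fun η : Fin (n + 1) → ℤ => ∏ j, (1 - p) / (1 + p) * p ^ |η j|)
        ∘ (Fin.consEquiv (fun _ : Fin (n + 1) => ℤ)))
        = fun z : ℤ × (Fin n → ℤ) =>
          ((1 - p) / (1 + p) * p ^ |z.1|) * ∏ j, (1 - p) / (1 + p) * p ^ |z.2 j| := by
      funext z
      simp [Fin.consEquiv, Fin.prod_univ_succ]
    rw [hcomp]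
    exact hm

lemma var_lower {ι : Type*} {W G : ι → ℝ} (hW : HasSum W 1) (hWpos : ∀ i, 0 ≤ W i)
    {B : ℝ} (hG : ∀ i, |G i| ≤ B) {i0 i1 : ι} (hne : i0 ≠ i1) :
    W i0 * W i1 * (G i1 - G i0) ^ 2 ≤
      (∑' i, W i * G i ^ 2) - (∑' i, W i * G i) ^ 2 := by
  classical
  have hWsum : Summable W := hW.summable
  have hWG : Summable (fun i => W i * G i) := by
    apply Summable.of_abs
    apply Summable.of_nonneg_of_le (fun i => abs_nonneg _) _ (hWsum.mul_right B)
    intro i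
    rw [abs_mul, abs_of_nonneg (hWpos i)]
    exact mul_le_mul_of_nonneg_left (hG i) (hWpos i)
  have hWG2 : Summable (fun i => W i * G i ^ 2) := by
    apply Summable.of_nonneg_of_le (fun i => mul_nonneg (hWpos i) (sq_nonneg _)) _
      (hWsum.mul_right (B ^ 2))
    intro i
    apply mul_le_mul_of_nonneg_left _ (hWpos i)
    calc G i ^ 2 = |G i| ^ 2 := (sq_abs _).symm
      _ ≤ B ^ 2 := by
          have := hG i
          nlinarith [abs_nonneg (G i)]
  set μ := ∑' i, W i * G i with hμ
  have hdecomp : ∀ i, W i * (G i - μ) ^ 2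
      = (W i * G i ^ 2 - (2 * μ) * (W i * G i)) + μ ^ 2 * W i := by
    intro i; ring
  have hVarsum : Summable (fun i => W i * (G i - μ) ^ 2) := by
    have : (fun i => W i * (G i - μ) ^ 2)
        = fun i => (W i * G i ^ 2 - (2 * μ) * (W i * G i)) + μ ^ 2 * W i :=
      funext hdecomp
    rw [this]
    exact (hWG2.sub (hWG.mul_left _)).add (hWsum.mul_left _)
  have hVareq : ∑' i, W i * (G i - μ) ^ 2 = (∑' i, W i * G i ^ 2) - μ ^ 2 := by
    calc ∑' i, W i * (G i - μ) ^ 2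
        = ∑' i, ((W i * G i ^ 2 - (2 * μ) * (W i * G i)) + μ ^ 2 * W i) :=
          tsum_congr hdecomp
      _ = (∑' i, (W i * G i ^ 2 - (2 * μ) * (W i * G i))) + ∑' i, μ ^ 2 * W i :=
          Summable.tsum_add (hWG2.sub (hWG.mul_left _)) (hWsum.mul_left _)
      _ = ((∑' i, W i * G i ^ 2) - ∑' i, (2 * μ) * (W i * G i)) + μ ^ 2 * ∑' i, W i := by
          rw [Summable.tsum_sub hWG2 (hWG.mul_left _), tsum_mul_left, tsum_mul_left]
      _ = (∑' i, W i * G i ^ 2) - μ ^ 2 := by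
          rw [tsum_mul_left, ← hμ, hW.tsum_eq]; ring
  rw [← hVareq]
  have hpair : W i0 * (G i0 - μ) ^ 2 + W i1 * (G i1 - μ) ^ 2
      ≤ ∑' i, W i * (G i - μ) ^ 2 := by
    have h := Summable.sum_le_tsum ({i0, i1} : Finset ι)
      (fun i _ => mul_nonneg (hWpos i) (sq_nonneg _)) hVarsum
    rwa [Finset.sum_pair hne] at h
  refine le_trans ?_ hpair
  have hle1 : W i0 + W i1 ≤ 1 := by
    have h := Summable.sum_le_tsum ({i0, i1} : Finset ι) (fun i _ => hWpos i) hWsum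
    rwa [Finset.sum_pair hne, hW.tsum_eq] at h
  nlinarith [sq_nonneg (W i0 * (G i0 - μ) + W i1 * (G i1 - μ)), hWpos i0, hWpos i1,
    mul_nonneg (hWpos i0) (sq_nonneg (G i0 - μ)),
    mul_nonneg (hWpos i1) (sq_nonneg (G i1 - μ)),
    mul_nonneg (mul_nonneg (hWpos i0) (hWpos i1)) (sq_nonneg (G i1 - G i0))]

/-- Exponential variance growth for the debiased threshold function: for
`p = e^{-ε}` with `ε ≤ 1`, there are constants `C > 1`, `c₀ > 0` such that for
every even `n` and every `x` with `Σ xᵢ = 0`, `Var[g(x̃)] ≥ c₀ Cⁿ / n^{5/2}`. -/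
theorem threshold_debiased_variance_exponential
    (ε p : ℝ) (hε0 : 0 < ε) (hε1 : ε ≤ 1) (hp : p = Real.exp (-ε)) :
    ∃ C c₀ : ℝ, 1 < C ∧ 0 < c₀ ∧
      ∀ n : ℕ, Even n → ∀ x : Fin n → ℤ, (∑ i, x i) = 0 →
        c₀ * C ^ n / (n : ℝ) ^ ((5 : ℝ) / 2) ≤
          (∑' η : Fin n → ℤ,
              (∏ j, (1 - p) / (1 + p) * p ^ |η j|) *
                (∑ ξ ∈ Fintype.piFinset (fun _ : Fin n => ({-1, 0, 1} : Finset ℤ)),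
                    (if 0 < ∑ i, (x + η + ξ) i then (1 : ℝ) else 0) *
                      ∏ j, (if ξ j = 0 then 1 + 2 * p / (1 - p) ^ 2
                        else -p / (1 - p) ^ 2)) ^ 2) -
            (∑' η : Fin n → ℤ,
              (∏ j, (1 - p) / (1 + p) * p ^ |η j|) *
                (∑ ξ ∈ Fintype.piFinset (fun _ : Fin n => ({-1, 0, 1} : Finset ℤ)),
                    (if 0 < ∑ i, (x + η + ξ) i then (1 : ℝ) else 0) *
                      ∏ j, (if ξ j = 0 then 1 + 2 * p / (1 - p) ^ 2
                        else -p / (1 - p) ^ 2))) ^ 2 := by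
  have hp0 : 0 < p := hp ▸ Real.exp_pos _
  have hp1 : p < 1 := by
    rw [hp]
    exact Real.exp_lt_one_iff.mpr (by linarith)
  have h1mp : (0:ℝ) < 1 - p := by linarith
  have h1pp : (0:ℝ) < 1 + p := by linarith
  have hCd : 1 < (1 + p ^ 2) / (1 - p ^ 2) := by
    rw [lt_div_iff₀ (by nlinarith)]
    nlinarith
  refine ⟨((1 + p ^ 2) / (1 - p ^ 2)) ^ 2, p, one_lt_pow₀ hCd (by norm_num), hp0, ?_⟩
  intro n hn x hx
  rcases Nat.eq_zero_or_pos n with rfl | hpos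
  · -- n = 0 : both sides vanish
    rw [Nat.cast_zero, Real.zero_rpow (by norm_num : ((5:ℝ)/2) ≠ 0), div_zero]
    have hz : (fun η : Fin 0 → ℤ =>
        (∏ j, (1 - p) / (1 + p) * p ^ |η j|) *
          (∑ ξ ∈ Fintype.piFinset (fun _ : Fin 0 => ({-1, 0, 1} : Finset ℤ)),
              (if 0 < ∑ i, (x + η + ξ) i then (1 : ℝ) else 0) *
                ∏ j, (if ξ j = 0 then 1 + 2 * p / (1 - p) ^ 2
                  else -p / (1 - p) ^ 2))) = fun _ => (0:ℝ) := by
      funext η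
      simp
    have hz2 : (fun η : Fin 0 → ℤ =>
        (∏ j, (1 - p) / (1 + p) * p ^ |η j|) *
          (∑ ξ ∈ Fintype.piFinset (fun _ : Fin 0 => ({-1, 0, 1} : Finset ℤ)),
              (if 0 < ∑ i, (x + η + ξ) i then (1 : ℝ) else 0) *
                ∏ j, (if ξ j = 0 then 1 + 2 * p / (1 - p) ^ 2
                  else -p / (1 - p) ^ 2)) ^ 2) = fun _ => (0:ℝ) := by
      funext η
      simp
    rw [hz, hz2, tsum_zero]
    norm_num
  obtain ⟨m, rfl⟩ : ∃ m, n = m + 1 := ⟨n - 1, by omega⟩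
  -- abbreviations
  have hq0 : (0:ℝ) < p / (1 - p) ^ 2 := by positivity
  have ha1 : (1:ℝ) < 1 + 2 * p / (1 - p) ^ 2 := by
    have : (0:ℝ) < 2 * p / (1 - p) ^ 2 := by positivity
    linarith
  have ha0 : (0:ℝ) < 1 + 2 * p / (1 - p) ^ 2 := by linarith
  set aa : ℝ := 1 + 2 * p / (1 - p) ^ 2 with haa
  set qq : ℝ := p / (1 - p) ^ 2 with hqq
  set cc : ℝ := (1 - p) / (1 + p) with hcc
  have hcc0 : 0 < cc := by positivity
  set Φ := Fintype.piFinset (fun _ : Fin (m + 1) => ({-1, 0, 1} : Finset ℤ)) with hΦ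
  set η0 : Fin (m + 1) → ℤ := 0 with hη0
  set η1 : Fin (m + 1) → ℤ := Pi.single 0 1 with hη1
  have hne : η0 ≠ η1 := by
    intro h
    have := congrFun h 0
    simp [hη0, hη1] at this
  -- membership structure of Φ
  have hmem : ∀ ξ : Fin (m+1) → ℤ, ξ ∈ Φ → ∀ j, ξ j = -1 ∨ ξ j = 0 ∨ ξ j = 1 := by
    intro ξ hξ j
    have := (Fintype.mem_piFinset.mp hξ) j
    simpa using this
  -- G bound
  set G : (Fin (m+1) → ℤ) → ℝ := fun η =>
    ∑ ξ ∈ Φ, (if 0 < ∑ i, (x + η + ξ) i then (1 : ℝ) else 0) *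
      ∏ j, (if ξ j = 0 then aa else -p / (1 - p) ^ 2) with hG
  have hprodabs : ∀ ξ : Fin (m+1) → ℤ,
      |∏ j, (if ξ j = 0 then aa else -p / (1 - p) ^ 2)|
        = ∏ j, (if ξ j = 0 then aa else qq) := by
    intro ξ
    rw [Finset.abs_prod]
    refine Finset.prod_congr rfl fun j _ => ?_
    split_ifs with h
    · exact abs_of_nonneg ha0.le
    · rw [neg_div, abs_neg, abs_of_nonneg hq0.le]
  have hGb : ∀ η, |G η| ≤ (qq + (aa + qq)) ^ (m + 1) := by
    intro η
    calc |G η| ≤ ∑ ξ ∈ Φ, |(if 0 < ∑ i, (x + η + ξ) i then (1 : ℝ) else 0) *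
          ∏ j, (if ξ j = 0 then aa else -p / (1 - p) ^ 2)| :=
        Finset.abs_sum_le_sum_abs _ _
      _ ≤ ∑ ξ ∈ Φ, ∏ j, (if ξ j = 0 then aa else qq) := by
          refine Finset.sum_le_sum fun ξ _ => ?_
          rw [abs_mul, hprodabs ξ]
          have h1 : |if 0 < ∑ i, (x + η + ξ) i then (1:ℝ) else 0| ≤ 1 := by
            split_ifs <;> simp
          have h2 : 0 ≤ ∏ j, (if ξ j = 0 then aa else qq) :=
            Finset.prod_nonneg fun j _ => by split_ifs <;> positivity
          calc |if 0 < ∑ i, (x + η + ξ) i then (1:ℝ) else 0| *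
                (∏ j, (if ξ j = 0 then aa else qq))
              ≤ 1 * ∏ j, (if ξ j = 0 then aa else qq) :=
                mul_le_mul_of_nonneg_right h1 h2
            _ = _ := one_mul _
      _ = (qq + (aa + qq)) ^ (m + 1) := by
          rw [hΦ, ← Finset.prod_univ_sum (fun _ : Fin (m+1) => ({-1, 0, 1} : Finset ℤ))
            (fun _ v => if v = 0 then aa else qq)]
          have hv : ∑ v ∈ ({-1, 0, 1} : Finset ℤ), (if v = 0 then aa else qq)
              = qq + (aa + qq) := by
            rw [show ({-1, 0, 1} : Finset ℤ) = insert (-1) (insert 0 {1}) from rfl]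
            rw [Finset.sum_insert (by decide), Finset.sum_insert (by decide),
              Finset.sum_singleton]
            norm_num
          simp [hv]
  -- apply the abstract variance bound
  have hWpos : ∀ η : Fin (m+1) → ℤ, 0 ≤ ∏ j, cc * p ^ |η j| :=
    fun η => Finset.prod_nonneg fun j _ =>
      mul_nonneg hcc0.le (zpow_nonneg hp0.le _)
  have key := var_lower (hasSum_W hp0 hp1 (m+1)) hWpos hGb hne
  refine le_trans ?_ key
  -- compute the two weights
  have hW0 : (∏ j, cc * p ^ |η0 j|) = cc ^ (m + 1) := by
    simp [hη0]
  have hW1 : (∏ j, cc * p ^ |η1 j|) = cc * p * cc ^ m := by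
    rw [hη1, Fin.prod_univ_succ]
    simp [Pi.single_eq_same, Pi.single_eq_of_ne (Fin.succ_ne_zero _)]
  -- sums of η0, η1
  have hxsum : ∀ (η ξ : Fin (m + 1) → ℤ),
      (∑ i, (x + η + ξ) i) = (∑ i, η i) + ∑ i, ξ i := by
    intro η ξ
    simp only [Pi.add_apply, Finset.sum_add_distrib, hx, zero_add]
  have hsum0 : (∑ i, η0 i) = 0 := by simp [hη0]
  have hsum1 : (∑ i, η1 i) = 1 := by simp [hη1]
  -- difference of G values
  have hdiff : G η1 - G η0 = ∑ ξ ∈ Φ, (if (∑ j, ξ j) = 0 then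
      ∏ j, (if ξ j = 0 then aa else -p / (1 - p) ^ 2) else 0) := by
    rw [hG]
    rw [← Finset.sum_sub_distrib]
    refine Finset.sum_congr rfl fun ξ _ => ?_
    rw [hxsum, hxsum, hsum0, hsum1, zero_add]
    rcases lt_trichotomy (∑ j, ξ j) 0 with h | h | h
    · rw [if_neg (by omega), if_neg (by omega), if_neg (by omega)]
      ring
    · rw [if_pos (by omega), if_neg (by omega), if_pos h]
      ring
    · rw [if_pos (by omega), if_pos (by omega), if_neg (by omega)]
      ring
  -- nonnegativity of each term of β₀, via parity
  have hβnonneg : ∀ ξ ∈ Φ, (0:ℝ) ≤ (if (∑ j, ξ j) = 0 then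
      ∏ j, (if ξ j = 0 then aa else -p / (1 - p) ^ 2) else 0) := by
    intro ξ hξ
    split_ifs with hs
    · have hfac : ∀ j, (if ξ j = 0 then aa else -p / (1 - p) ^ 2)
          = ((-1:ℝ) ^ ((ξ j).natAbs)) * (if ξ j = 0 then aa else qq) := by
        intro j
        rcases hmem ξ hξ j with h | h | h <;>
          simp [h, hqq, neg_div] <;> ring
      have heven : Even (∑ j, (ξ j).natAbs) := by
        have h1 : ∀ j : Fin (m+1), (2:ℤ) ∣ (|ξ j| - ξ j) := by
          intro j
          rcases abs_cases (ξ j) with ⟨h, _⟩ | ⟨h, _⟩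
          · rw [h]; simp
          · rw [h]; exact ⟨-ξ j, by ring⟩
        have h2 : (2:ℤ) ∣ ∑ j, (|ξ j| - ξ j) := Finset.dvd_sum fun j _ => h1 j
        rw [Finset.sum_sub_distrib, hs, sub_zero] at h2
        have h3 : ((∑ j, (ξ j).natAbs : ℕ) : ℤ) = ∑ j, |ξ j| := by
          push_cast [Int.natCast_natAbs]
          rfl
        rw [← Int.even_coe_nat, h3]
        obtain ⟨k, hk⟩ := h2
        exact ⟨k, by omega⟩
      rw [Finset.prod_congr rfl (fun j _ => hfac j), Finset.prod_mul_distrib,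
        Finset.prod_pow_eq_pow_sum, heven.neg_one_pow, one_mul]
      exact Finset.prod_nonneg fun j _ => by split_ifs <;> positivity
    · exact le_refl 0
  -- β₀ ≥ aa^(m+1)
  have h0mem : (0 : Fin (m+1) → ℤ) ∈ Φ := by
    rw [hΦ, Fintype.mem_piFinset]
    intro j
    simp
  have hβ : aa ^ (m+1) ≤ ∑ ξ ∈ Φ, (if (∑ j, ξ j) = 0 then
      ∏ j, (if ξ j = 0 then aa else -p / (1 - p) ^ 2) else 0) := by
    have hterm : (if (∑ j, (0 : Fin (m+1) → ℤ) j) = 0 then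
        ∏ j, (if (0 : Fin (m+1) → ℤ) j = 0 then aa else -p / (1 - p) ^ 2) else 0)
        = aa ^ (m+1) := by
      simp
    calc aa ^ (m+1) = _ := hterm.symm
      _ ≤ _ := Finset.single_le_sum hβnonneg h0mem
  -- assemble
  rw [hW0, hW1, hdiff]
  have hne1 : (1 - p) ≠ 0 := ne_of_gt h1mp
  have hne2 : (1 + p) ≠ 0 := ne_of_gt h1pp
  have hne3 : (1 : ℝ) - p ^ 2 ≠ 0 := by nlinarith
  have hca : cc * aa = (1 + p ^ 2) / (1 - p ^ 2) := by
    rw [hcc, haa]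
    field_simp
    ring
  clear_value aa qq cc
  calc p * (((1 + p ^ 2) / (1 - p ^ 2)) ^ 2) ^ (m+1) / ((m+1 : ℕ) : ℝ) ^ ((5:ℝ)/2)
      ≤ p * (((1 + p ^ 2) / (1 - p ^ 2)) ^ 2) ^ (m+1) := by
        apply div_le_self (by positivity)
        apply Real.one_le_rpow _ (by norm_num)
        exact_mod_cast Nat.one_le_iff_ne_zero.mpr (by omega)
    _ = cc ^ (m+1) * (cc * p * cc ^ m) * (aa ^ (m+1)) ^ 2 := by
        rw [← hca]
        ring
    _ ≤ cc ^ (m+1) * (cc * p * cc ^ m) *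
          (∑ ξ ∈ Φ, (if (∑ j, ξ j) = 0 then
            ∏ j, (if ξ j = 0 then aa else -p / (1 - p) ^ 2) else 0)) ^ 2 := by
        have hsq : (aa ^ (m+1)) ^ 2 ≤ (∑ ξ ∈ Φ, (if (∑ j, ξ j) = 0 then
            ∏ j, (if ξ j = 0 then aa else -p / (1 - p) ^ 2) else 0)) ^ 2 :=
          pow_le_pow_left₀ (by positivity) hβ 2
        exact mul_le_mul_of_nonneg_left hsq (by positivity)
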